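/- arXiv:2107.12252 — 2 statements merged into one kernel-verified Lean document; each statement's English description precedes it below -/
import Mathlib

section
/- Let p and q be distinct primes, let d be the multiplicative order of q modulo p, and let v = (p−1)/d. Then the polynomial f = 1 + X + X² + ⋯ + X^{p−1} over the q-adic integers ℤ_q factorizes as f = f₁·f₂·⋯·f_v, where each f_r is a monic irreducible polynomial over ℤ_q of degree d, and the reductions of f₁,…,f_v modulo q are pairwise distinct monic irreducible polynomials of degree d over 𝔽_q whose product is the reduction of f. -/
/-!
Over `𝔽_q` the polynomial `1 + X + ⋯ + X^{p-1}` is the cyclotomic polynomial `Φ_p`, which is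
squarefree because `q ≠ p`; the Frobenius `x ↦ x^q` permutes the primitive `p`-th roots of unity
in orbits of length `d`, so `Φ_p` is a product of `(p - 1) / d` distinct monic irreducible
factors of degree `d`. Distinct irreducibles are coprime, so Hensel's lemma lifts this
factorization to `ℤ_q`, and a monic polynomial with irreducible reduction is irreducible.
-/

open Polynomial UniqueFactorizationMonoid

theorem Polynomial.exists_eq_mul_add_mul_of_degree_lt {S : Type*} [CommRing S] [Nontrivial S]
    {A B e : S[X]} (hA : A.Monic) (hB : B.Monic) (hAB : IsCoprime A B)
    (he : e.degree < A.degree + B.degree) :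
    ∃ u w : S[X], u.degree < A.degree ∧ w.degree < B.degree ∧ e = A * w + B * u := by
  obtain ⟨a, b, hab⟩ := hAB
  set u := b * e %ₘ A
  set w := a * e + B * (b * e /ₘ A)
  have hdecomp : e = A * w + B * u := by
    linear_combination (-B) * modByMonic_add_div (b * e) A - e * hab
  have hu : u.degree < A.degree := degree_modByMonic_lt _ hA
  refine ⟨u, w, hu, ?_, hdecomp⟩
  have hBu : (B * u).degree < A.degree + B.degree := by
    rw [hB.degree_mul_comm, hB.degree_mul, add_comm A.degree, add_comm u.degree]
    exact WithBot.add_lt_add_left (degree_ne_bot.mpr hB.ne_zero) hu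
  have hAw : (A * w).degree < A.degree + B.degree := by
    rw [eq_sub_of_add_eq hdecomp.symm]
    exact (degree_sub_le _ _).trans_lt (max_lt he hBu)
  rwa [hA.degree_mul_comm, hA.degree_mul, add_comm,
    WithBot.add_lt_add_iff_left (degree_ne_bot.mpr hA.ne_zero)] at hAw

section AdicLimits

variable {R : Type*} [CommRing R] {ϖ : R}

theorem smodEq_span_singleton_pow_iff {x y : R} {n : ℕ} :
    x ≡ y [SMOD (Ideal.span {ϖ} ^ n • ⊤ : Ideal R)] ↔ ϖ ^ n ∣ x - y := by
  rw [SModEq.sub_mem, smul_eq_mul, Ideal.mul_top, Ideal.span_singleton_pow,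
    Ideal.mem_span_singleton]

theorem IsHausdorff.eq_zero_of_forall_pow_dvd [IsHausdorff (Ideal.span {ϖ}) R] {x : R}
    (h : ∀ n, ϖ ^ n ∣ x) : x = 0 :=
  IsHausdorff.haus ‹_› x fun n => smodEq_span_singleton_pow_iff.mpr (by simpa using h n)

theorem IsPrecomplete.exists_forall_pow_dvd_sub [IsPrecomplete (Ideal.span {ϖ}) R] {x : ℕ → R}
    (h : ∀ n, ϖ ^ n ∣ x (n + 1) - x n) : ∃ L, ∀ n, ϖ ^ n ∣ x n - L := by
  have hx : AdicCompletion.IsAdicCauchy (Ideal.span {ϖ}) R x :=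
    (AdicCompletion.isAdicCauchy_iff _ _ x).mpr fun n =>
      (smodEq_span_singleton_pow_iff.mpr (h n)).symm
  obtain ⟨L, hL⟩ := IsPrecomplete.prec ‹_› hx
  exact ⟨L, fun n => smodEq_span_singleton_pow_iff.mp (hL n)⟩

namespace Polynomial

theorem eq_zero_of_forall_C_pow_dvd [IsHausdorff (Ideal.span {ϖ}) R] {P : R[X]}
    (h : ∀ n, C (ϖ ^ n) ∣ P) : P = 0 :=
  ext fun i => IsHausdorff.eq_zero_of_forall_pow_dvd fun n => (C_dvd_iff_dvd_coeff _ _).mp (h n) i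

theorem exists_degree_lt_forall_C_pow_dvd_sub [IsPrecomplete (Ideal.span {ϖ}) R] {s : ℕ}
    {c : ℕ → R[X]} (hdeg : ∀ n, (c n).degree < s) (hc : ∀ n, C (ϖ ^ n) ∣ c (n + 1) - c n) :
    ∃ G : R[X], G.degree < s ∧ ∀ n, C (ϖ ^ n) ∣ c n - G := by
  choose L hL using fun i => IsPrecomplete.exists_forall_pow_dvd_sub (x := fun n => (c n).coeff i)
    fun n => by simpa using (C_dvd_iff_dvd_coeff _ _).mp (hc n) i
  set G := ∑ i ∈ Finset.range s, C (L i) * X ^ i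
  have hG : G.degree < s := by
    simpa only [G, ← Fin.sum_univ_eq_sum_range] using degree_sum_fin_lt fun i : Fin s => L i
  refine ⟨G, hG, fun n => (C_dvd_iff_dvd_coeff _ _).mpr fun i => ?_⟩
  by_cases hi : i < s
  · simpa [G, finsetSum_coeff, coeff_C_mul_X_pow, hi] using hL i n
  · have hi' : s ≤ i := not_lt.mp hi
    rw [coeff_sub, coeff_eq_zero_of_degree_lt ((hdeg n).trans_le (by exact_mod_cast hi')),
      coeff_eq_zero_of_degree_lt (hG.trans_le (by exact_mod_cast hi')), sub_zero]
    exact dvd_zero _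

theorem exists_monic_forall_C_pow_dvd_sub [IsPrecomplete (Ideal.span {ϖ}) R] [Nontrivial R]
    {s : ℕ} {c : ℕ → R[X]} (hmon : ∀ n, (c n).Monic) (hdeg : ∀ n, (c n).natDegree = s)
    (hc : ∀ n, C (ϖ ^ n) ∣ c (n + 1) - c n) :
    ∃ G : R[X], G.Monic ∧ ∀ n, C (ϖ ^ n) ∣ c n - G := by
  have hlow : ∀ n, (c n - X ^ s).degree < (s : WithBot ℕ) := fun n => by
    have hcn : (c n).degree = s := by rw [degree_eq_natDegree (hmon n).ne_zero, hdeg]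
    rw [← hcn]
    exact degree_sub_lt_left (by rw [hcn, degree_X_pow]) (hmon n).ne_zero
      (by rw [(hmon n).leadingCoeff, (monic_X_pow s).leadingCoeff])
  obtain ⟨G, hGdeg, hG⟩ := exists_degree_lt_forall_C_pow_dvd_sub hlow
    fun n => by simpa using hc n
  exact ⟨X ^ s + G, monic_X_pow_add hGdeg, fun n => by simpa [sub_sub, add_comm] using hG n⟩

end Polynomial

end AdicLimits

section HenselLifting

variable {R K : Type*} [CommRing R] [Field K] {ϖ : R} {φ : R →+* K}

namespace Polynomial

theorem C_dvd_iff_map_eq_zero (hker : RingHom.ker φ = Ideal.span {ϖ}) {P : R[X]} :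
    C ϖ ∣ P ↔ P.map φ = 0 := by
  rw [C_dvd_iff_dvd_coeff, Polynomial.ext_iff]
  refine forall_congr' fun i => ?_
  rw [coeff_map, coeff_zero, ← RingHom.mem_ker, hker, Ideal.mem_span_singleton]

theorem map_eq_map_of_C_dvd_sub (hker : RingHom.ker φ = Ideal.span {ϖ}) {P Q : R[X]} {n : ℕ}
    (h : C (ϖ ^ (n + 1)) ∣ P - Q) : P.map φ = Q.map φ := by
  rw [← sub_eq_zero, ← Polynomial.map_sub, ← C_dvd_iff_map_eq_zero hker]
  exact (_root_.map_dvd C (dvd_pow_self ϖ n.succ_ne_zero)).trans h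

/-- Writing `f - g h = ϖ^(n+1) E`, the correction is `g + ϖ^(n+1) u`, `h + ϖ^(n+1) w` where
`E ≡ g w + h u (mod ϖ)` with `deg u < deg g`, `deg w < deg h`, solvable because the reductions of
`g` and `h` are coprime. -/
theorem hensel_step [IsDomain R] (hφ : Function.Surjective φ)
    (hker : RingHom.ker φ = Ideal.span {ϖ}) {f g h : R[X]} (hf : f.Monic) (hg : g.Monic)
    (hh : h.Monic) (hcop : IsCoprime (g.map φ) (h.map φ)) {n : ℕ}
    (hfgh : C (ϖ ^ (n + 1)) ∣ f - g * h) :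
    ∃ g' h' : R[X], g'.Monic ∧ h'.Monic ∧ C (ϖ ^ (n + 1)) ∣ g' - g ∧
      C (ϖ ^ (n + 1)) ∣ h' - h ∧ C (ϖ ^ (n + 2)) ∣ f - g' * h' := by
  rcases eq_or_ne (f - g * h) 0 with hexact | hinexact
  · exact ⟨g, h, hg, hh, by simp, by simp, by simp [hexact]⟩
  obtain ⟨E, hE⟩ := hfgh
  set Q := ϖ ^ (n + 1)
  have hQ : Q ≠ 0 := fun hQ => hinexact (by simp [hE, hQ])
  have hmap : f.map φ = g.map φ * h.map φ := by
    rw [← Polynomial.map_mul]; exact map_eq_map_of_C_dvd_sub hker ⟨E, hE⟩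
  have hdegE : (E.map φ).degree < (g.map φ).degree + (h.map φ).degree := by
    have hlt : (f - g * h).degree < f.degree := by
      refine degree_sub_lt_left ?_ hf.ne_zero (by rw [hf.leadingCoeff, (hg.mul hh).leadingCoeff])
      rw [← hf.degree_map φ, hmap, ← Polynomial.map_mul, (hg.mul hh).degree_map]
    rw [hE, degree_C_mul hQ, ← hf.degree_map φ, hmap, degree_mul] at hlt
    exact degree_map_le.trans_lt hlt
  obtain ⟨u₀, w₀, hu₀, hw₀, hE₀⟩ :=
    exists_eq_mul_add_mul_of_degree_lt (hg.map φ) (hh.map φ) hcop hdegE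
  obtain ⟨u, rfl, hu⟩ := exists_degree_eq_of_mem_lifts (mem_lifts_of_surjective hφ u₀)
  obtain ⟨w, rfl, hw⟩ := exists_degree_eq_of_mem_lifts (mem_lifts_of_surjective hφ w₀)
  have hkey : C ϖ ∣ E - g * w - h * u := by
    rw [C_dvd_iff_map_eq_zero hker]
    simp only [Polynomial.map_sub, Polynomial.map_mul, hE₀]
    ring
  have hCQ_le (P : R[X]) : (C Q * P).degree ≤ P.degree := by
    rw [← smul_eq_C_mul]; exact degree_smul_le _ _
  refine ⟨g + C Q * u, h + C Q * w, hg.add_of_left ?_, hh.add_of_left ?_,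
    ⟨u, add_sub_cancel_left _ _⟩, ⟨w, add_sub_cancel_left _ _⟩, ?_⟩
  · exact (hCQ_le u).trans_lt (by rwa [hu, ← hg.degree_map φ])
  · exact (hCQ_le w).trans_lt (by rwa [hw, ← hh.degree_map φ])
  have hexpand : f - (g + C Q * u) * (h + C Q * w) =
      C Q * (E - g * w - h * u) - C Q * C Q * (u * w) := by
    linear_combination hE
  have hϖQ : C ϖ ∣ C Q := _root_.map_dvd C (dvd_pow_self ϖ n.succ_ne_zero)
  have hpow : C (ϖ ^ (n + 2)) = C Q * C ϖ := by rw [← C_mul, ← pow_succ]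
  rw [hexpand, hpow, mul_assoc (C Q) (C Q)]
  exact dvd_sub (mul_dvd_mul_left _ hkey) (mul_dvd_mul_left _ (hϖQ.mul_right _))

theorem exists_seq_monic_approx_factors [IsDomain R] (hφ : Function.Surjective φ)
    (hker : RingHom.ker φ = Ideal.span {ϖ}) {f : R[X]} (hf : f.Monic) {A B : K[X]}
    (hA : A.Monic) (hB : B.Monic) (hAB : IsCoprime A B) (hfAB : f.map φ = A * B) :
    ∃ g h : ℕ → R[X], (∀ n, (g n).Monic) ∧ (∀ n, (h n).Monic) ∧ (∀ n, (g n).map φ = A) ∧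
      (∀ n, (h n).map φ = B) ∧ (∀ n, C (ϖ ^ (n + 1)) ∣ f - g n * h n) ∧
      (∀ n, C (ϖ ^ n) ∣ g (n + 1) - g n) ∧ (∀ n, C (ϖ ^ n) ∣ h (n + 1) - h n) := by
  obtain ⟨g₀, hg₀A, -, hg₀⟩ := lifts_and_degree_eq_and_monic (mem_lifts_of_surjective hφ A) hA
  obtain ⟨h₀, hh₀B, -, hh₀⟩ := lifts_and_degree_eq_and_monic (mem_lifts_of_surjective hφ B) hB
  let IsApprox (n : ℕ) (x : R[X] × R[X]) : Prop := x.1.Monic ∧ x.2.Monic ∧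
    x.1.map φ = A ∧ x.2.map φ = B ∧ C (ϖ ^ (n + 1)) ∣ f - x.1 * x.2
  have hstep (n : ℕ) (x : R[X] × R[X]) (hx : IsApprox n x) : ∃ y, IsApprox (n + 1) y ∧
      C (ϖ ^ (n + 1)) ∣ y.1 - x.1 ∧ C (ϖ ^ (n + 1)) ∣ y.2 - x.2 := by
    obtain ⟨hg, hh, hgA, hhB, hfgh⟩ := hx
    obtain ⟨g', h', hg', hh', hgg', hhh', hfgh'⟩ :=
      hensel_step hφ hker hf hg hh (by rwa [hgA, hhB]) hfgh
    exact ⟨(g', h'), ⟨hg', hh', (map_eq_map_of_C_dvd_sub hker hgg').trans hgA,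
      (map_eq_map_of_C_dvd_sub hker hhh').trans hhB, hfgh'⟩, hgg', hhh'⟩
  choose! next hnext using hstep
  let approx (n : ℕ) : R[X] × R[X] := Nat.rec (g₀, h₀) next n
  have happrox (n : ℕ) : IsApprox n (approx n) := by
    induction n with
    | zero =>
      show IsApprox 0 (g₀, h₀)
      refine ⟨hg₀, hh₀, hg₀A, hh₀B, ?_⟩
      rw [zero_add, pow_one, C_dvd_iff_map_eq_zero hker, Polynomial.map_sub, Polynomial.map_mul,
        hg₀A, hh₀B, hfAB, sub_self]
    | succ n ih => exact (hnext n _ ih).1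
  have hle (n : ℕ) : C (ϖ ^ n) ∣ C (ϖ ^ (n + 1)) := _root_.map_dvd C (pow_dvd_pow ϖ n.le_succ)
  exact ⟨fun n => (approx n).1, fun n => (approx n).2, fun n => (happrox n).1,
    fun n => (happrox n).2.1, fun n => (happrox n).2.2.1, fun n => (happrox n).2.2.2.1,
    fun n => (happrox n).2.2.2.2, fun n => (hle n).trans (hnext n _ (happrox n)).2.1,
    fun n => (hle n).trans (hnext n _ (happrox n)).2.2⟩

theorem exists_monic_lifts_of_map_eq_mul [IsDomain R] [IsAdicComplete (Ideal.span {ϖ}) R]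
    (hφ : Function.Surjective φ) (hker : RingHom.ker φ = Ideal.span {ϖ}) {f : R[X]}
    (hf : f.Monic) {A B : K[X]} (hA : A.Monic) (hB : B.Monic) (hAB : IsCoprime A B)
    (hfAB : f.map φ = A * B) :
    ∃ G H : R[X], G.Monic ∧ H.Monic ∧ G.map φ = A ∧ H.map φ = B ∧ f = G * H := by
  obtain ⟨g, h, hg, hh, hgA, hhB, hfgh, hgc, hhc⟩ :=
    exists_seq_monic_approx_factors hφ hker hf hA hB hAB hfAB
  obtain ⟨G, hG, hGlim⟩ := exists_monic_forall_C_pow_dvd_sub hg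
    (fun n => by rw [← (hg n).natDegree_map φ, hgA]) hgc
  obtain ⟨H, hH, hHlim⟩ := exists_monic_forall_C_pow_dvd_sub hh
    (fun n => by rw [← (hh n).natDegree_map φ, hhB]) hhc
  refine ⟨G, H, hG, hH, ?_, ?_, ?_⟩
  · rw [← hgA 1]
    exact (map_eq_map_of_C_dvd_sub hker (n := 0) (by simpa using hGlim 1)).symm
  · rw [← hhB 1]
    exact (map_eq_map_of_C_dvd_sub hker (n := 0) (by simpa using hHlim 1)).symm
  · refine sub_eq_zero.mp (eq_zero_of_forall_C_pow_dvd (ϖ := ϖ) fun n => ?_)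
    have hsplit : f - G * H = (f - g n * h n) + g n * (h n - H) + H * (g n - G) := by ring
    rw [hsplit]
    exact dvd_add (dvd_add ((_root_.map_dvd C (pow_dvd_pow ϖ n.le_succ)).trans (hfgh n))
      ((hHlim n).mul_left _)) ((hGlim n).mul_left _)

theorem exists_monic_lifts_of_map_eq_prod [IsDomain R] [IsAdicComplete (Ideal.span {ϖ}) R]
    (hφ : Function.Surjective φ) (hker : RingHom.ker φ = Ideal.span {ϖ}) (s : Finset K[X])
    (hmon : ∀ A ∈ s, A.Monic) (hcop : (s : Set K[X]).Pairwise IsCoprime) {f : R[X]}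
    (hf : f.Monic) (hfs : f.map φ = ∏ A ∈ s, A) :
    ∃ F : K[X] → R[X], (∀ A ∈ s, (F A).Monic ∧ (F A).map φ = A) ∧ f = ∏ A ∈ s, F A := by
  classical
  induction s using Finset.cons_induction generalizing f with
  | empty =>
    refine ⟨fun _ => 1, by simp, ?_⟩
    rw [Finset.prod_empty]
    refine eq_one_of_monic_natDegree_zero hf ?_
    rw [← hf.natDegree_map φ, hfs, Finset.prod_empty, natDegree_one]
  | cons a s ha ih =>
    rw [Finset.forall_mem_cons] at hmon
    rw [Finset.coe_cons, Set.pairwise_insert] at hcop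
    have hcop' : IsCoprime a (∏ A ∈ s, A) :=
      IsCoprime.prod_right fun B hB => (hcop.2 B hB (ne_of_mem_of_not_mem hB ha).symm).1
    obtain ⟨G, H, hG, hH, hGa, hHs, rfl⟩ := exists_monic_lifts_of_map_eq_mul hφ hker hf hmon.1
      (monic_prod_of_monic s id hmon.2) hcop' (by rw [hfs, Finset.prod_cons]; rfl)
    obtain ⟨F, hF, rfl⟩ := ih hmon.2 hcop.1 hH hHs
    have hFs : ∀ A ∈ s, Function.update F a G A = F A := fun A hA =>
      Function.update_of_ne (ne_of_mem_of_not_mem hA ha) _ _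
    refine ⟨Function.update F a G, ?_, ?_⟩
    · rw [Finset.forall_mem_cons, Function.update_self]
      exact ⟨⟨hG, hGa⟩, fun A hA => hFs A hA ▸ hF A hA⟩
    · rw [Finset.prod_cons, Function.update_self, Finset.prod_congr rfl hFs]

end Polynomial

end HenselLifting

theorem ZMod.orderOf_unitOfCoprime {n : ℕ} (a : ℕ) (h : a.Coprime n) :
    orderOf (ZMod.unitOfCoprime a h) = orderOf (a : ZMod n) := by
  rw [← orderOf_units, ZMod.coe_unitOfCoprime]

namespace UniqueFactorizationMonoid

theorem prod_toFinset_normalizedFactors_of_squarefree {α : Type*} [CommMonoidWithZero α]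
    [Nontrivial α] [StrongNormalizationMonoid α] [UniqueFactorizationMonoid α] [DecidableEq α]
    {x : α} (hx : Squarefree x) : ∏ a ∈ (normalizedFactors x).toFinset, a = normalize x := by
  rw [← prod_normalizedFactors_eq hx.ne_zero, Finset.prod_eq_multiset_prod, Multiset.toFinset_val,
    Multiset.dedup_eq_self.mpr ((squarefree_iff_nodup_normalizedFactors hx.ne_zero).mp hx),
    Multiset.map_id']

theorem pairwise_isCoprime_normalizedFactors {α : Type*} [CommRing α] [IsBezout α]
    [NormalizationMonoid α] [UniqueFactorizationMonoid α] [DecidableEq α] (x : α) :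
    ((normalizedFactors x).toFinset : Set α).Pairwise IsCoprime := by
  intro a ha b hb hab
  rw [Finset.mem_coe, Multiset.mem_toFinset] at ha hb
  rw [(irreducible_of_normalized_factor a ha).coprime_iff_not_dvd]
  exact fun hdvd => hab (((irreducible_of_normalized_factor a ha).associated_of_dvd
    (irreducible_of_normalized_factor b hb) hdvd).eq_of_normalized
    (normalize_normalized_factor a ha) (normalize_normalized_factor b hb))

end UniqueFactorizationMonoid

theorem Polynomial.exists_finset_factorization_cyclotomic {K : Type*} [Field K] [Fintype K]
    {ℓ f n : ℕ} [Fact ℓ.Prime] (hK : Fintype.card K = ℓ ^ f) (hn : ℓ.Coprime n) :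
    ∃ S : Finset K[X], S.card = n.totient / orderOf ((ℓ ^ f : ℕ) : ZMod n) ∧
      (∀ P ∈ S, P.Monic ∧ Irreducible P ∧ P.natDegree = orderOf ((ℓ ^ f : ℕ) : ZMod n)) ∧
      (S : Set K[X]).Pairwise IsCoprime ∧ ∏ P ∈ S, P = cyclotomic n K := by
  classical
  have : NeZero (n : K) := ⟨fun h => by
    have := charP_of_card_eq_prime_pow hK
    exact (Nat.Prime.coprime_iff_not_dvd Fact.out).mp hn ((CharP.cast_eq_zero_iff K ℓ n).mp h)⟩
  refine ⟨(normalizedFactors (cyclotomic n K)).toFinset, ?_, fun P hP => ?_,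
    pairwise_isCoprime_normalizedFactors _, ?_⟩
  · rw [normalizedFactors_cyclotomic_card hK hn, ZMod.orderOf_unitOfCoprime]
  · rw [Multiset.mem_toFinset] at hP
    rw [Polynomial.mem_normalizedFactors_iff (cyclotomic_ne_zero n K)] at hP
    refine ⟨hP.2.1, hP.1, ?_⟩
    rw [natDegree_of_dvd_cyclotomic_of_irreducible hK hn hP.2.2 hP.1,
      ZMod.orderOf_unitOfCoprime]
  · rw [prod_toFinset_normalizedFactors_of_squarefree (squarefree_cyclotomic n K),
      (cyclotomic.monic n K).normalize_eq_self]

instance PadicInt.isAdicComplete_span_p (p : ℕ) [Fact p.Prime] :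
    IsAdicComplete (Ideal.span {(p : ℤ_[p])}) ℤ_[p] :=
  PadicInt.maximalIdeal_eq_span_p (p := p) ▸ inferInstance

/-- Let `p ≠ q` be primes, `d` the multiplicative order of `q` mod `p`, and
`v = (p-1)/d`.  Then `f = 1 + X + ⋯ + X^{p-1}` over `ℤ_q` factorizes as a product of
`v` monic irreducible polynomials of degree `d`, whose reductions mod `q` are pairwise
distinct monic irreducible polynomials of degree `d` over `𝔽_q` with product the
reduction of `f`. -/
theorem geometric_sum_padic_factorization
    (p q : ℕ) (hp : p.Prime) [hq : Fact q.Prime] (hpq : p ≠ q)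
    (d v : ℕ) (hd : d = orderOf ((q : ZMod p))) (hv : v = (p - 1) / d) :
    ∃ Fs : Fin v → Polynomial (PadicInt q),
      (∀ r, (Fs r).Monic ∧ Irreducible (Fs r) ∧ (Fs r).natDegree = d) ∧
      (∏ r, Fs r) = (∑ i ∈ Finset.range p, Polynomial.X ^ i) ∧
      (∀ r, ((Fs r).map (PadicInt.toZMod)).Monic ∧
        Irreducible ((Fs r).map (PadicInt.toZMod)) ∧
        ((Fs r).map (PadicInt.toZMod)).natDegree = d) ∧
      Function.Injective (fun r => (Fs r).map (PadicInt.toZMod)) ∧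
      (∏ r, (Fs r).map (PadicInt.toZMod)) =
        ((∑ i ∈ Finset.range p, Polynomial.X ^ i : Polynomial (PadicInt q)).map
          (PadicInt.toZMod)) := by
  have := Fact.mk hp
  obtain ⟨S, hcard, hS, hcop, hprod⟩ := exists_finset_factorization_cyclotomic (K := ZMod q)
    (f := 1) (n := p) (by rw [ZMod.card, pow_one]) ((Nat.coprime_primes hq.out hp).mpr hpq.symm)
  simp only [pow_one, Nat.totient_prime hp, ← hd, ← hv] at hcard hS
  obtain ⟨F, hF, hfF⟩ := exists_monic_lifts_of_map_eq_prod
    (ZMod.ringHom_surjective PadicInt.toZMod)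
    (PadicInt.ker_toZMod.trans PadicInt.maximalIdeal_eq_span_p) S (fun P hP => (hS P hP).1)
    hcop (cyclotomic.monic p ℤ_[q]) (by rw [map_cyclotomic, hprod])
  let e : Fin v ≃ S := (S.equivFin.trans (finCongr hcard)).symm
  have hFe (r : Fin v) : (F (e r)).map PadicInt.toZMod = e r := (hF _ (e r).2).2
  have hprodF : ∏ r, F (e r) = cyclotomic p ℤ_[q] := by
    rw [e.prod_comp (fun A : S => F A), Finset.prod_coe_sort S F, hfF]
  rw [← cyclotomic_prime]
  refine ⟨fun r => F (e r), fun r => ?_, hprodF, fun r => hFe r ▸ hS _ (e r).2, ?_, ?_⟩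
  · obtain ⟨hmon, hirr, hdeg⟩ := hS _ (e r).2
    have hFmon := (hF _ (e r).2).1
    refine ⟨hFmon, hFmon.irreducible_of_irreducible_map _ _ (hFe r ▸ hirr), ?_⟩
    rw [← hFmon.natDegree_map PadicInt.toZMod, hFe, hdeg]
  · exact fun r₁ r₂ h => e.injective (Subtype.ext (by simpa only [hFe] using h))
  · rw [← Polynomial.map_prod, hprodF]
end

section
/- Let p be a prime, let s ∈ GL(p,ℂ) be the permutation matrix of the p-cycle (1,2,…,p), and let G be a finite subgroup of GL(p,ℂ) all of whose elements are monomial matrices with all nonzero entries roots of unity, such that the permutation part φ(G) is exactly the cyclic group generated by the p-cycle (1,2,…,p). Then there exist a diagonal matrix d ∈ D(p,ℂ) and a scalar matrix z whose diagonal entry is a root of unity of p-power order, with z^p ∈ G ∩ D(p,ℂ), such that d⁻¹Gd is the subgroup generated by the single matrix s·z together with the diagonal subgroup G ∩ D(p,ℂ). -/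
/-!
An element `g ∈ G` whose permutation part is the `p`-cycle `c` is a weighted shift, and `g ^ p`
is the scalar `Δ` given by the product of its weights. Splitting the root of unity `Δ` into its
`p`-primary part and the rest gives `Δ = ζ ^ p * μ ^ p` with `ζ` of `p`-power order and `μ` a
power of `Δ`, so `h = g μ⁻¹` lies in `G` and its weights multiply to `ζ ^ p`. Weights with
product `ζ ^ p` differ from the constant weights `ζ` by a coboundary `t (c j) / t j`, hence
conjugation by `diag t` carries `S ζ` to `h`. Every element of `G` differs from a power of `h` by
a diagonal element of `G`, and conjugation by `diag t` fixes diagonal matrices.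
-/

def HasPermPart {m : Type*} [DecidableEq m] {F : Type*} [Field F]
    (g : Matrix m m F) (σ : Equiv.Perm m) : Prop :=
  ∃ d : m → Fˣ, ∀ i j, g i j = if i = σ j then (d j : F) else 0

def IsMonomialRootsOfUnity {m : Type*} [DecidableEq m] {F : Type*} [Field F]
    (g : Matrix m m F) : Prop :=
  ∃ (σ : Equiv.Perm m) (d : m → Fˣ), (∀ j, IsOfFinOrder (d j)) ∧
    ∀ i j, g i j = if i = σ j then (d j : F) else 0

open Equiv

theorem Fin.exists_apply_finRotate_eq_mul {α : Type*} [CommMonoid α] {n : ℕ} (f : Fin n → α)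
    (hf : ∏ j, f j = 1) : ∃ t : Fin n → α, ∀ j, t (finRotate n j) = t j * f j := by
  cases n with
  | zero => exact ⟨f, fun j => j.elim0⟩
  | succ n =>
    refine ⟨fun j => partialProd f j.castSucc, fun j => ?_⟩
    induction j using Fin.lastCases with
    | last =>
      simp only [finRotate_last, castSucc_zero, partialProd_zero]
      rw [← partialProd_succ, succ_last, ← hf, partialProd, val_last,
        List.take_of_length_le (by simp), List.prod_ofFn]
    | cast i => simp [coeSucc_eq_succ, partialProd_succ]

theorem Equiv.Perm.finRotate_pow_self (n : ℕ) : finRotate n ^ n = 1 := by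
  match n with
  | 0 | 1 => exact Subsingleton.elim _ _
  | n + 2 =>
    have h := IsCycle.orderOf (isCycle_finRotate (n := n))
    rw [support_finRotate, Finset.card_univ, Fintype.card_fin] at h
    simpa only [h] using pow_orderOf_eq_one (finRotate (n + 2))

theorem IsOfFinOrder.exists_mul_pow_prime_eq {α : Type*} [CommGroup α] {p : ℕ} (hp : p.Prime)
    {x : α} (hx : IsOfFinOrder x) :
    ∃ k : ℕ, ∃ δ ∈ Subgroup.zpowers x, ∃ μ ∈ Subgroup.zpowers x,
      δ ^ p ^ k = 1 ∧ δ * μ ^ p = x := by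
  -- Bézout for `p` and the `p`-free part `m` of the order: `x = x ^ (m b) * (x ^ a) ^ p`.
  set N := orderOf x
  set m := ordCompl[p] N
  have hNm : ((p ^ N.factorization p : ℕ) : ℤ) * m = N := by
    exact_mod_cast Nat.ordProj_mul_ordCompl_eq_self N p
  have hbez : (p : ℤ) * Nat.gcdA p m + m * Nat.gcdB p m = 1 := by
    have := Nat.gcd_eq_gcd_ab p m
    rw [Nat.coprime_ordCompl hp hx.orderOf_pos.ne'] at this
    exact_mod_cast this.symm
  refine ⟨N.factorization p, x ^ ((m : ℤ) * Nat.gcdB p m), Subgroup.zpow_mem_zpowers _ _,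
    x ^ Nat.gcdA p m, Subgroup.zpow_mem_zpowers _ _, ?_, ?_⟩
  · have hN : ((m : ℤ) * Nat.gcdB p m) * ((p ^ N.factorization p : ℕ) : ℤ) =
        N * Nat.gcdB p m := by
      linear_combination (Nat.gcdB p m : ℤ) * hNm
    rw [← zpow_natCast, ← zpow_mul, hN, zpow_mul, zpow_natCast, pow_orderOf_eq_one, one_zpow]
  · rw [← zpow_natCast, ← zpow_mul, ← zpow_add,
      show (m : ℤ) * Nat.gcdB p m + Nat.gcdA p m * p = 1 by linear_combination hbez, zpow_one]

theorem IsAlgClosed.exists_units_pow_eq {K : Type*} [Field K] [IsAlgClosed K] (x : Kˣ) {n : ℕ}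
    (hn : 0 < n) : ∃ y : Kˣ, y ^ n = x := by
  obtain ⟨y, hy⟩ := IsAlgClosed.exists_pow_nat_eq (x : K) hn
  have hy0 : y ≠ 0 := by
    rintro rfl
    exact x.ne_zero (by rw [← hy, zero_pow hn.ne'])
  exact ⟨Units.mk0 y hy0, Units.ext (by simpa using hy)⟩

theorem Subgroup.conj_mem_iff_mem_closure {K : Type*} [Group K] {G : Subgroup K} {s : Set K}
    {d : K} (hG : G = closure ((fun x => d * x * d⁻¹) '' s)) (x : K) :
    d * x * d⁻¹ ∈ G ↔ x ∈ closure s := by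
  rw [hG, show (fun x => d * x * d⁻¹) = (MulAut.conj d).toMonoidHom from rfl,
    ← MonoidHom.map_closure]
  exact mem_map_iff_mem (MulAut.conj d).injective

namespace Matrix

section Monomial

variable {m : Type*} [DecidableEq m] {F : Type*} [Field F]

def monomial (σ : Perm m) (d : m → Fˣ) : Matrix m m F :=
  of fun i j => if i = σ j then (d j : F) else 0

theorem monomial_apply (σ : Perm m) (d : m → Fˣ) (i j : m) :
    monomial σ d i j = if i = σ j then (d j : F) else 0 := rfl

theorem hasPermPart_iff {g : Matrix m m F} {σ : Perm m} :
    HasPermPart g σ ↔ ∃ d, g = monomial σ d := by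
  simp only [HasPermPart, ← Matrix.ext_iff, monomial_apply]

theorem isMonomialRootsOfUnity_iff {g : Matrix m m F} :
    IsMonomialRootsOfUnity g ↔ ∃ σ d, (∀ j, IsOfFinOrder (d j)) ∧ g = monomial σ d := by
  simp only [IsMonomialRootsOfUnity, ← Matrix.ext_iff, monomial_apply]

theorem _root_.HasPermPart.unique {g : Matrix m m F} {σ τ : Perm m}
    (hσ : HasPermPart g σ) (hτ : HasPermPart g τ) : σ = τ := by
  obtain ⟨d, rfl⟩ := hasPermPart_iff.1 hσ
  obtain ⟨e, he⟩ := hasPermPart_iff.1 hτ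
  ext j
  by_contra hne
  have hentry := congr_fun₂ he (σ j) j
  simp only [monomial_apply, if_neg hne] at hentry
  exact (d j).ne_zero hentry

theorem monomial_one (d : m → Fˣ) : monomial 1 d = diagonal fun j => (d j : F) := by
  ext i j
  rw [monomial_apply, diagonal_apply]
  split_ifs with h <;> simp_all

@[simp]
theorem monomial_one_one : monomial 1 (fun _ => 1) = (1 : Matrix m m F) := by
  simp [monomial_one]

theorem _root_.HasPermPart.isDiag {g : Matrix m m F} (h : HasPermPart g 1) : g.IsDiag := by
  obtain ⟨d, rfl⟩ := hasPermPart_iff.1 h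
  rw [monomial_one]
  exact isDiag_diagonal _

variable [Fintype m] {σ τ : Perm m} {d e : m → Fˣ}

theorem monomial_mul (σ τ : Perm m) (d e : m → Fˣ) :
    monomial σ d * monomial τ e = monomial (σ * τ) fun j => d (τ j) * e j := by
  ext i j
  simp only [mul_apply, monomial_apply, ite_mul, zero_mul, mul_ite, mul_zero]
  rw [Finset.sum_eq_single (τ j) (fun k _ hk => by simp [hk]) (by simp)]
  by_cases hi : i = σ (τ j) <;> simp [hi]

theorem _root_.HasPermPart.mul {a b : Matrix m m F} (ha : HasPermPart a σ)
    (hb : HasPermPart b τ) : HasPermPart (a * b) (σ * τ) := by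
  obtain ⟨d, rfl⟩ := hasPermPart_iff.1 ha
  obtain ⟨e, rfl⟩ := hasPermPart_iff.1 hb
  exact hasPermPart_iff.2 ⟨_, monomial_mul σ τ d e⟩

def monomialUnit (σ : Perm m) (d : m → Fˣ) : GL m F where
  val := monomial σ d
  inv := monomial σ⁻¹ fun j => (d (σ⁻¹ j))⁻¹
  val_inv := by simp [monomial_mul]
  inv_val := by simp [monomial_mul]

@[simp]
theorem val_monomialUnit : (monomialUnit σ d : Matrix m m F) = monomial σ d := rfl

theorem monomialUnit_mul :
    monomialUnit σ d * monomialUnit τ e = monomialUnit (σ * τ) fun j => d (τ j) * e j :=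
  Units.ext (monomial_mul σ τ d e)

theorem monomialUnit_inv :
    (monomialUnit σ d)⁻¹ = monomialUnit σ⁻¹ fun j => (d (σ⁻¹ j))⁻¹ :=
  Units.ext rfl

theorem monomialUnit_one_one : monomialUnit (1 : Perm m) (fun _ => (1 : Fˣ)) = 1 :=
  Units.ext monomial_one_one

theorem monomialUnit_const_pow (σ : Perm m) (a : Fˣ) (k : ℕ) :
    monomialUnit σ (fun _ => a) ^ k = monomialUnit (σ ^ k) fun _ => a ^ k := by
  induction k with
  | zero => simpa using (monomialUnit_one_one (m := m) (F := F)).symm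
  | succ k ih => simp only [pow_succ, ih, monomialUnit_mul]

theorem monomialUnit_one_conj (t : m → Fˣ) (σ : Perm m) (d : m → Fˣ) :
    monomialUnit 1 t * monomialUnit σ d * (monomialUnit 1 t)⁻¹ =
      monomialUnit σ fun j => t (σ j) * d j * (t j)⁻¹ := by
  simp [monomialUnit_inv, monomialUnit_mul]

theorem hasPermPart_iff_exists_monomialUnit {g : GL m F} :
    HasPermPart (g : Matrix m m F) σ ↔ ∃ d, g = monomialUnit σ d := by
  simp only [hasPermPart_iff, Units.ext_iff, val_monomialUnit]

theorem _root_.HasPermPart.zpow {g : GL m F} (h : HasPermPart (g : Matrix m m F) σ) (k : ℤ) :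
    HasPermPart ((g ^ k : GL m F) : Matrix m m F) (σ ^ k) := by
  have hpow (n : ℕ) : HasPermPart ((g ^ n : GL m F) : Matrix m m F) (σ ^ n) := by
    induction n with
    | zero => exact hasPermPart_iff.2 ⟨fun _ => 1, monomial_one_one.symm⟩
    | succ n ih => simpa only [pow_succ, Units.val_mul] using ih.mul h
  cases k with
  | ofNat n => simpa using hpow n
  | negSucc n =>
    obtain ⟨d, hd⟩ := hasPermPart_iff_exists_monomialUnit.1 (hpow (n + 1))
    simp only [zpow_negSucc, hd, monomialUnit_inv]
    exact hasPermPart_iff_exists_monomialUnit.2 ⟨_, rfl⟩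

theorem _root_.IsMonomialRootsOfUnity.exists_eq_monomialUnit {g : GL m F}
    (hg : IsMonomialRootsOfUnity (g : Matrix m m F)) (hσ : HasPermPart (g : Matrix m m F) σ) :
    ∃ d, (∀ j, IsOfFinOrder (d j)) ∧ g = monomialUnit σ d := by
  obtain ⟨τ, d, hd, hgd⟩ := isMonomialRootsOfUnity_iff.1 hg
  obtain rfl : τ = σ := (hasPermPart_iff.2 ⟨d, hgd⟩).unique hσ
  exact ⟨d, hd, Units.ext hgd⟩

theorem GeneralLinearGroup.scalar_eq_monomialUnit (a : Fˣ) :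
    GeneralLinearGroup.scalar m a = monomialUnit 1 fun _ => a :=
  Units.ext (by simp [GeneralLinearGroup.coe_scalar, monomial_one])

theorem GeneralLinearGroup.val_scalar_eq_smul_one (a : Fˣ) :
    (GeneralLinearGroup.scalar m a : Matrix m m F) = (a : F) • 1 := by
  simp [GeneralLinearGroup.coe_scalar, smul_one_eq_diagonal]

theorem GeneralLinearGroup.isDiag_scalar (a : Fˣ) :
    (GeneralLinearGroup.scalar m a : Matrix m m F).IsDiag := by
  rw [val_scalar_eq_smul_one]
  exact isDiag_smul_one m _

theorem monomialUnit_const_eq_mul_scalar (σ : Perm m) (a : Fˣ) :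
    monomialUnit σ (fun _ => a) =
      monomialUnit σ (fun _ => 1) * GeneralLinearGroup.scalar m a := by
  simp [GeneralLinearGroup.scalar_eq_monomialUnit, monomialUnit_mul]

theorem monomialUnit_mul_scalar (σ : Perm m) (d : m → Fˣ) (a : Fˣ) :
    monomialUnit σ d * GeneralLinearGroup.scalar m a = monomialUnit σ fun j => d j * a := by
  simp [GeneralLinearGroup.scalar_eq_monomialUnit, monomialUnit_mul]

theorem IsDiag.commute {n α : Type*} [Fintype n] [DecidableEq n]
    [NonUnitalNonAssocCommSemiring α] {A B : Matrix n n α} (hA : A.IsDiag) (hB : B.IsDiag) :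
    Commute A B := by
  rw [← hA.diagonal_diag, ← hB.diagonal_diag]
  simp only [Commute, SemiconjBy, diagonal_mul_diagonal, mul_comm]

theorem monomialUnit_one_conj_of_isDiag (t : m → Fˣ) {w : GL m F}
    (hw : (w : Matrix m m F).IsDiag) : monomialUnit 1 t * w * (monomialUnit 1 t)⁻¹ = w := by
  have hcomm : Commute (monomialUnit 1 t) w := Commute.units_val_iff.1 <|
    (hasPermPart_iff.2 ⟨t, rfl⟩).isDiag.commute hw
  rw [hcomm.eq, mul_inv_cancel_right]

end Monomial

section Shift

variable {F : Type*} [Field F]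

theorem exists_monomialUnit_finRotate_eq_conj {n : ℕ} (e : Fin n → Fˣ) (a : Fˣ)
    (he : ∏ j, e j = a ^ n) : ∃ t : Fin n → Fˣ, monomialUnit (finRotate n) e =
      monomialUnit 1 t * monomialUnit (finRotate n) (fun _ => a) * (monomialUnit 1 t)⁻¹ := by
  obtain ⟨t, ht⟩ := Fin.exists_apply_finRotate_eq_mul (fun j => e j * a⁻¹)
    (by rw [Finset.prod_mul_distrib, he]; simp)
  refine ⟨t, ?_⟩
  rw [monomialUnit_one_conj]
  congr 1
  funext j
  rw [ht, mul_assoc (t j), inv_mul_cancel_right, mul_inv_cancel_comm]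

theorem monomialUnit_finRotate_pow_self [IsAlgClosed F] {n : ℕ} (e : Fin n → Fˣ) :
    monomialUnit (finRotate n) e ^ n = GeneralLinearGroup.scalar (Fin n) (∏ j, e j) := by
  rcases n.eq_zero_or_pos with rfl | hn
  · exact Subsingleton.elim _ _
  obtain ⟨a, ha⟩ := IsAlgClosed.exists_units_pow_eq (∏ j, e j) hn
  obtain ⟨t, het⟩ := exists_monomialUnit_finRotate_eq_conj e a ha.symm
  rw [het, conj_pow, monomialUnit_const_pow, Perm.finRotate_pow_self, ha,
    ← GeneralLinearGroup.scalar_eq_monomialUnit]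
  exact monomialUnit_one_conj_of_isDiag t (GeneralLinearGroup.isDiag_scalar _)

end Shift

section Generation

variable {m : Type*} [Fintype m] [DecidableEq m] {F : Type*} [Field F]

theorem eq_closure_singleton_union_isDiag {G : Subgroup (GL m F)} {c : Perm m} {h : GL m F}
    (hG : h ∈ G) (hc : HasPermPart (h : Matrix m m F) c)
    (hperm : ∀ y ∈ G, ∃ k : ℤ, HasPermPart (y : Matrix m m F) (c ^ k)) :
    G = Subgroup.closure ({h} ∪ {g | g ∈ G ∧ (g : Matrix m m F).IsDiag}) := by
  refine le_antisymm (fun y hy => ?_) <|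
    (Subgroup.closure_le G).2 (Set.union_subset (Set.singleton_subset_iff.2 hG) fun g hg => hg.1)
  obtain ⟨k, hk⟩ := hperm y hy
  have hdiag : ((y * (h ^ k)⁻¹ : GL m F) : Matrix m m F).IsDiag :=
    HasPermPart.isDiag (by simpa using hk.mul (hc.zpow (-k)))
  have hh : h ∈ Subgroup.closure ({h} ∪ {g | g ∈ G ∧ (g : Matrix m m F).IsDiag}) :=
    Subgroup.subset_closure (Or.inl rfl)
  rw [← inv_mul_cancel_right y (h ^ k)]
  exact mul_mem (Subgroup.subset_closure (Or.inr ⟨mul_mem hy (inv_mem (zpow_mem hG k)), hdiag⟩))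
    (zpow_mem hh k)

theorem conj_mem_iff_mem_closure_singleton_union_isDiag {G : Subgroup (GL m F)} {c : Perm m}
    {t : m → Fˣ} {s h : GL m F} (hG : h ∈ G) (hc : HasPermPart (h : Matrix m m F) c)
    (hperm : ∀ y ∈ G, ∃ k : ℤ, HasPermPart (y : Matrix m m F) (c ^ k))
    (hs : monomialUnit 1 t * s * (monomialUnit 1 t)⁻¹ = h) (x : GL m F) :
    monomialUnit 1 t * x * (monomialUnit 1 t)⁻¹ ∈ G ↔
      x ∈ Subgroup.closure ({s} ∪ {g | g ∈ G ∧ (g : Matrix m m F).IsDiag}) := by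
  refine Subgroup.conj_mem_iff_mem_closure ?_ x
  rw [Set.image_union, Set.image_singleton, hs, Set.EqOn.image_eq_self
    (f := fun x => monomialUnit 1 t * x * (monomialUnit 1 t)⁻¹)
    fun w hw => monomialUnit_one_conj_of_isDiag t hw.2]
  exact eq_closure_singleton_union_isDiag hG hc hperm

end Generation

end Matrix

open Matrix in
theorem monomial_group_with_cyclic_permutation_part_normal_form_general
    {p : ℕ} (hp : p.Prime)
    (G : Subgroup (Matrix.GeneralLinearGroup (Fin p) ℂ))
    (hmono : ∀ g ∈ G, IsMonomialRootsOfUnity (g : Matrix (Fin p) (Fin p) ℂ))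
    (S : Matrix.GeneralLinearGroup (Fin p) ℂ)
    (hS : ∀ i j : Fin p, (S : Matrix (Fin p) (Fin p) ℂ) i j =
      if i = finRotate p j then 1 else 0)
    (hperm : ∀ σ : Equiv.Perm (Fin p),
      (∃ g ∈ G, HasPermPart (g : Matrix (Fin p) (Fin p) ℂ) σ) ↔
      σ ∈ Subgroup.zpowers (finRotate p)) :
    ∃ d : Matrix.GeneralLinearGroup (Fin p) ℂ,
      Matrix.IsDiag (d : Matrix (Fin p) (Fin p) ℂ) ∧
      ∃ z : Matrix.GeneralLinearGroup (Fin p) ℂ,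
        (∃ ζ : ℂˣ, (z : Matrix (Fin p) (Fin p) ℂ) = (ζ : ℂ) • (1 : Matrix (Fin p) (Fin p) ℂ) ∧
          ∃ k : ℕ, ζ ^ (p ^ k) = 1) ∧
        z ^ p ∈ G ∧
        Matrix.IsDiag ((z ^ p : Matrix.GeneralLinearGroup (Fin p) ℂ) : Matrix (Fin p) (Fin p) ℂ) ∧
        (∀ x : Matrix.GeneralLinearGroup (Fin p) ℂ,
          d * x * d⁻¹ ∈ G ↔
          x ∈ Subgroup.closure ({S * z} ∪ {g : Matrix.GeneralLinearGroup (Fin p) ℂ |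
            g ∈ G ∧ Matrix.IsDiag (g : Matrix (Fin p) (Fin p) ℂ)})) := by
  set c := finRotate p
  have hSc : S = monomialUnit c fun _ => 1 :=
    Units.ext (Matrix.ext fun i j => by simp [hS, monomial_apply])
  have hpowers (y) (hy : y ∈ G) :
      ∃ k : ℤ, HasPermPart (y : Matrix (Fin p) (Fin p) ℂ) (c ^ k) := by
    obtain ⟨σ, d, -, hd⟩ := hmono y hy
    obtain ⟨k, rfl⟩ := Subgroup.mem_zpowers_iff.1 ((hperm σ).1 ⟨y, hy, d, hd⟩)
    exact ⟨k, d, hd⟩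
  obtain ⟨g, hgG, hgc⟩ := (hperm c).2 (Subgroup.mem_zpowers c)
  obtain ⟨e, he, rfl⟩ := (hmono g hgG).exists_eq_monomialUnit hgc
  have hscalar_mem (a) (ha : a ∈ Subgroup.zpowers (∏ j, e j)) :
      GeneralLinearGroup.scalar (Fin p) a ∈ G := by
    obtain ⟨i, rfl⟩ := ha
    rw [map_zpow, ← monomialUnit_finRotate_pow_self]
    exact zpow_mem (pow_mem hgG p) i
  have hΔ : IsOfFinOrder (∏ j, e j) :=
    Finset.prod_induction _ _ (fun _ _ => IsOfFinOrder.mul) .one fun j _ => he j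
  obtain ⟨k, δ, hδ, μ, hμ, hδk, hδμ⟩ := hΔ.exists_mul_pow_prime_eq hp
  obtain ⟨ζ, rfl⟩ := IsAlgClosed.exists_units_pow_eq δ hp.pos
  have hhG : (monomialUnit c fun j => e j * μ⁻¹) ∈ G := by
    rw [← monomialUnit_mul_scalar, map_inv]
    exact mul_mem hgG (inv_mem (hscalar_mem μ hμ))
  obtain ⟨t, hht⟩ := exists_monomialUnit_finRotate_eq_conj (fun j => e j * μ⁻¹) ζ
    (by rw [Finset.prod_mul_distrib, ← hδμ]; simp)
  rw [monomialUnit_const_eq_mul_scalar, ← hSc] at hht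
  refine ⟨monomialUnit 1 t, (hasPermPart_iff.2 ⟨t, rfl⟩).isDiag,
    GeneralLinearGroup.scalar (Fin p) ζ,
    ⟨ζ, GeneralLinearGroup.val_scalar_eq_smul_one ζ, k + 1, by rw [pow_succ', pow_mul, hδk]⟩,
    map_pow (GeneralLinearGroup.scalar (Fin p)) ζ p ▸ hscalar_mem _ hδ,
    map_pow (GeneralLinearGroup.scalar (Fin p)) ζ p ▸ GeneralLinearGroup.isDiag_scalar _,
    conj_mem_iff_mem_closure_singleton_union_isDiag hhG (hasPermPart_iff.2 ⟨_, rfl⟩) hpowers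
      hht.symm⟩

/-- Let `s` be the permutation matrix of the `p`-cycle `(1,2,…,p)` and `G` a finite
subgroup of `GL(p,ℂ)` of monomial matrices with root-of-unity entries whose
permutation part is exactly `⟨(1,2,…,p)⟩`.  Then `G` is conjugate by a diagonal
matrix `d` to the group generated by `s·z` and `G ∩ D(p,ℂ)`, where `z` is a scalar
matrix whose diagonal entry is a root of unity of `p`-power order and `z^p ∈ G ∩ D(p,ℂ)`. -/
theorem monomial_group_with_cyclic_permutation_part_normal_form
    {p : ℕ} (hp : p.Prime)
    (G : Subgroup (Matrix.GeneralLinearGroup (Fin p) ℂ)) (hfin : Finite G)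
    (hmono : ∀ g ∈ G, IsMonomialRootsOfUnity (g : Matrix (Fin p) (Fin p) ℂ))
    (S : Matrix.GeneralLinearGroup (Fin p) ℂ)
    (hS : ∀ i j : Fin p, (S : Matrix (Fin p) (Fin p) ℂ) i j =
      if i = finRotate p j then 1 else 0)
    (hperm : ∀ σ : Equiv.Perm (Fin p),
      (∃ g ∈ G, HasPermPart (g : Matrix (Fin p) (Fin p) ℂ) σ) ↔
      σ ∈ Subgroup.zpowers (finRotate p)) :
    ∃ d : Matrix.GeneralLinearGroup (Fin p) ℂ,
      Matrix.IsDiag (d : Matrix (Fin p) (Fin p) ℂ) ∧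
      ∃ z : Matrix.GeneralLinearGroup (Fin p) ℂ,
        (∃ ζ : ℂˣ, (z : Matrix (Fin p) (Fin p) ℂ) = (ζ : ℂ) • (1 : Matrix (Fin p) (Fin p) ℂ) ∧
          ∃ k : ℕ, ζ ^ (p ^ k) = 1) ∧
        z ^ p ∈ G ∧
        Matrix.IsDiag ((z ^ p : Matrix.GeneralLinearGroup (Fin p) ℂ) : Matrix (Fin p) (Fin p) ℂ) ∧
        (∀ x : Matrix.GeneralLinearGroup (Fin p) ℂ,
          d * x * d⁻¹ ∈ G ↔
          x ∈ Subgroup.closure ({S * z} ∪ {g : Matrix.GeneralLinearGroup (Fin p) ℂ |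
            g ∈ G ∧ Matrix.IsDiag (g : Matrix (Fin p) (Fin p) ℂ)})) :=
  monomial_group_with_cyclic_permutation_part_normal_form_general hp G hmono S hS hperm
end
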